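/- Let p_m = exp(−d'−d'')/(B_N · S(d'',d') · C(N,d'')) with 1 ≤ d' ≤ d'' ≤ N, N ≥ 4. Then ln(1/p_m) ≤ d'·ln(d''·e²) + d''·ln(d'·e²) + d''·ln(N/d''). -/

import Mathlib

/-!
Taking logarithms, `ln(1/p_m) = d' + d'' + ln B_N + ln S(d'',d') + ln C(N,d'')`. Bounding
`B_N ≤ 2`, the Stirling number by `(1/2)(d''e)^{d'} d'^{d''-2d'}` and the binomial coefficient by
`(Ne/d'')^{d''}` (from `k^k/k! ≤ e^k`), the constant `ln 2` cancels and the resulting bound is the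
claimed one minus `2 d' ln d' ≥ 0`.
-/

open Real

theorem Nat.choose_le_mul_exp_one_div_pow (n k : ℕ) :
    (n.choose k : ℝ) ≤ (n * exp 1 / k) ^ k := by
  have hkk : (0 : ℝ) < (k : ℝ) ^ k := mod_cast Nat.pow_self_pos
  calc (n.choose k : ℝ) ≤ (n : ℝ) ^ k / k.factorial := Nat.choose_le_pow_div k n
    _ = ((n : ℝ) / k) ^ k * ((k : ℝ) ^ k / k.factorial) := by
      rw [div_pow]; field_simp
    _ ≤ ((n : ℝ) / k) ^ k * exp k := by
      gcongr; exact pow_div_factorial_le_exp _ k.cast_nonneg k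
    _ = (n * exp 1 / k) ^ k := by
      rw [← exp_one_pow, ← mul_pow, div_mul_eq_mul_div]

theorem Real.log_choose_le {n k : ℕ} (hk : 0 < k) (hkn : k ≤ n) :
    log (n.choose k : ℝ) ≤ k * (log n + 1 - log k) := by
  have hk' : (0 : ℝ) < k := mod_cast hk
  have hn : (0 : ℝ) < n := mod_cast hk.trans_le hkn
  calc log (n.choose k : ℝ) ≤ log ((n * exp 1 / k) ^ k) :=
        log_le_log (mod_cast Nat.choose_pos hkn) (Nat.choose_le_mul_exp_one_div_pow n k)
    _ = k * (log n + 1 - log k) := by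
      rw [log_pow, log_div (by positivity) hk'.ne', log_mul hn.ne' (exp_ne_zero 1), log_exp]

theorem Real.log_half_mul_pow_mul_rpow {x y : ℝ} (hx : 0 < x) (hy : 0 < y) (n : ℕ) (t : ℝ) :
    log ((1 / 2) * (y * exp 1) ^ n * x ^ t) = n * (log y + 1) + t * log x - log 2 := by
  rw [log_mul (by positivity) (by positivity), log_mul (by norm_num) (by positivity), log_pow,
    log_rpow hx, log_mul hy.ne' (exp_ne_zero 1), log_exp, one_div, log_inv]
  ring

theorem Real.exp_one_pow_three_div_le_two :
    exp 1 ^ 3 / ((exp 1 - 1) ^ 2 * (exp 1 + 1)) ≤ 2 := by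
  have he₁ := exp_one_gt_d9
  have he₂ := exp_one_lt_d9
  rw [div_le_iff₀ (by nlinarith)]
  nlinarith

theorem log_inv_prior_upper_general (N d' d'' : ℕ) (B S : ℝ)
    (hd' : 1 ≤ d') (hd'd'' : d' ≤ d'') (hd''N : d'' ≤ N)
    (hB0 : 0 < B)
    (hB : B ≤ Real.exp 1 ^ 3 / ((Real.exp 1 - 1) ^ 2 * (Real.exp 1 + 1)))
    (hS0 : 0 < S)
    (hS : S ≤ (1 / 2 : ℝ) * ((d'' : ℝ) * Real.exp 1) ^ d' *
      (d' : ℝ) ^ ((d'' : ℝ) - 2 * d')) :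
    Real.log (1 / (Real.exp (-(d' : ℝ) - d'') / (B * S * (N.choose d'' : ℝ)))) ≤
      (d' : ℝ) * Real.log ((d'' : ℝ) * Real.exp 1 ^ 2) +
      (d'' : ℝ) * Real.log ((d' : ℝ) * Real.exp 1 ^ 2) +
      (d'' : ℝ) * Real.log ((N : ℝ) / d'') := by
  have hd'₀ : (0 : ℝ) < d' := mod_cast hd'
  have hd''₀ : (0 : ℝ) < d'' := mod_cast hd'.trans hd'd''
  have hN₀ : (0 : ℝ) < N := hd''₀.trans_le (mod_cast hd''N)
  have hC₀ : (0 : ℝ) < N.choose d'' := mod_cast Nat.choose_pos hd''N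
  have hlogB : log B ≤ log 2 := log_le_log hB0 (hB.trans exp_one_pow_three_div_le_two)
  have hlogS := (log_le_log hS0 hS).trans_eq (log_half_mul_pow_mul_rpow hd'₀ hd''₀ d' _)
  have hlogC := log_choose_le (hd'.trans hd'd'') hd''N
  have hlogd' : 0 ≤ (d' : ℝ) * log d' := mul_nonneg hd'₀.le (log_nonneg (mod_cast hd'))
  rw [one_div_div, log_div (by positivity) (exp_ne_zero _), log_exp,
    log_mul (by positivity) hC₀.ne', log_mul hB0.ne' hS0.ne',
    log_mul hd''₀.ne' (by positivity), log_mul hd'₀.ne' (by positivity), log_pow, log_exp,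
    log_div hN₀.ne' hd''₀.ne']
  push_cast
  linarith

/-- Upper bound on `ln(1/p_m)` for the prior
`p_m = exp(-d'-d'')/(B_N ⬝ S(d'',d') ⬝ C(N,d''))`, where `S` denotes the Stirling
number of the second kind (given here through its known upper bound) and `B_N`
through its known upper bound. -/
theorem log_inv_prior_upper (N d' d'' : ℕ) (B S : ℝ)
    (hd' : 1 ≤ d') (hd'd'' : d' ≤ d'') (hd''N : d'' ≤ N) (hN : 4 ≤ N)
    (hB0 : 0 < B)
    (hB : B ≤ Real.exp 1 ^ 3 / ((Real.exp 1 - 1) ^ 2 * (Real.exp 1 + 1)))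
    (hS0 : 0 < S)
    (hS : S ≤ (1 / 2 : ℝ) * ((d'' : ℝ) * Real.exp 1) ^ d' *
      (d' : ℝ) ^ ((d'' : ℝ) - 2 * d')) :
    Real.log (1 / (Real.exp (-(d' : ℝ) - d'') / (B * S * (N.choose d'' : ℝ)))) ≤
      (d' : ℝ) * Real.log ((d'' : ℝ) * Real.exp 1 ^ 2) +
      (d'' : ℝ) * Real.log ((d' : ℝ) * Real.exp 1 ^ 2) +
      (d'' : ℝ) * Real.log ((N : ℝ) / d'') :=
  log_inv_prior_upper_general N d' d'' B S hd' hd'd'' hd''N hB0 hB hS0 hS
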